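/- If every vector v admits a decomposition v = Σ_{i=0}^N R_iᵀ v_i with Σ_i v_iᵀ (R_i A R_iᵀ) v_i ≤ C₀² vᵀ A v (a stable decomposition), then the smallest eigenvalue of the additive Schwarz operator P = Σ_i R_iᵀ(R_i A R_iᵀ)⁻¹R_i A satisfies λ_min(P) ≥ C₀⁻². -/

import Mathlib

/-!
Write `B i = R i * A * (R i)ᵀ` and `u i = R i A v`, so that `vᵀ A P v = Σ uᵢᵀ Bᵢ⁻¹ uᵢ`. For an
eigenpair `P v = μ v` and a stable decomposition `v = Σ R iᵀ wᵢ`, the identity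
`vᵀ A v = Σ wᵢᵀ uᵢ` together with `0 ≤ (wᵢ - c Bᵢ⁻¹ uᵢ)ᵀ Bᵢ (wᵢ - c Bᵢ⁻¹ uᵢ)` summed over `i`
gives `2 c vᵀAv ≤ Σ wᵢᵀ Bᵢ wᵢ + c² μ vᵀAv ≤ c vᵀAv + c² μ vᵀAv`, i.e. `1 ≤ c μ`.
-/

open Matrix

theorem Matrix.vecMul_injective_of_mulVec_surjective {R m k : Type*} [CommRing R] [LinearOrder R]
    [IsStrictOrderedRing R] [Fintype m] [Fintype k] {M : Matrix m k R}
    (hM : Function.Surjective M.mulVec) : Function.Injective M.vecMul := by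
  refine (injective_iff_map_eq_zero M.vecMulLinear).2 fun x hx => ?_
  obtain ⟨y, rfl⟩ := hM x
  rw [← dotProduct_self_eq_zero, dotProduct_mulVec, ← vecMulLinear_apply, hx, zero_dotProduct]

theorem Matrix.PosDef.mul_mul_transpose_of_mulVec_surjective {m k : Type*} [Fintype m] [Fintype k]
    {A : Matrix k k ℝ} (hA : A.PosDef) {R : Matrix m k ℝ} (hR : Function.Surjective R.mulVec) :
    (R * A * Rᵀ).PosDef := by
  simpa [conjTranspose_eq_transpose_of_trivial] using
    hA.mul_mul_conjTranspose_same (vecMul_injective_of_mulVec_surjective hR)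

theorem Matrix.PosDef.two_mul_dotProduct_le {m : Type*} [Fintype m] [DecidableEq m]
    {B : Matrix m m ℝ} (hB : B.PosDef) (t : ℝ) (w u : m → ℝ) :
    2 * t * (w ⬝ᵥ u) ≤ w ⬝ᵥ B *ᵥ w + t ^ 2 * (u ⬝ᵥ B⁻¹ *ᵥ u) := by
  set x := B⁻¹ *ᵥ u
  have hx : B *ᵥ x = u := by
    rw [mulVec_mulVec, mul_nonsing_inv _ ((isUnit_iff_isUnit_det B).1 hB.isUnit), one_mulVec]
  have hsymm : ∀ y z : m → ℝ, y ⬝ᵥ B *ᵥ z = z ⬝ᵥ B *ᵥ y := fun y z => by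
    rw [dotProduct_mulVec, ← mulVec_transpose, show Bᵀ = B from hB.1, dotProduct_comm]
  have hnonneg : 0 ≤ (w - t • x) ⬝ᵥ B *ᵥ (w - t • x) := by
    simpa using hB.posSemidef.dotProduct_mulVec_nonneg (w - t • x)
  have hux : u ⬝ᵥ x = x ⬝ᵥ B *ᵥ x := by rw [hx, dotProduct_comm]
  rw [hux, ← hx]
  simp only [mulVec_sub, mulVec_smul, sub_dotProduct, dotProduct_sub, smul_dotProduct,
    dotProduct_smul, smul_eq_mul, hsymm x w] at hnonneg
  linarith

section AdditiveSchwarz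

variable {ι k : Type*} [Fintype ι] [Fintype k] {m : ι → Type*} [∀ i, Fintype (m i)]

theorem sum_transpose_mulVec_dotProduct (R : ∀ i, Matrix (m i) k ℝ) (w : ∀ i, m i → ℝ)
    (y : k → ℝ) : (∑ i, (R i)ᵀ *ᵥ w i) ⬝ᵥ y = ∑ i, w i ⬝ᵥ R i *ᵥ y := by
  simp only [sum_dotProduct, mulVec_transpose, dotProduct_mulVec]

variable [∀ i, DecidableEq (m i)]

noncomputable def additiveSchwarz (A : Matrix k k ℝ) (R : ∀ i, Matrix (m i) k ℝ) :
    Matrix k k ℝ :=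
  ∑ i, (R i)ᵀ * (R i * A * (R i)ᵀ)⁻¹ * R i * A

theorem dotProduct_mulVec_additiveSchwarz {A : Matrix k k ℝ} (hA : A.IsSymm)
    (R : ∀ i, Matrix (m i) k ℝ) (v : k → ℝ) :
    v ⬝ᵥ A *ᵥ (additiveSchwarz A R *ᵥ v) =
      ∑ i, (R i *ᵥ A *ᵥ v) ⬝ᵥ (R i * A * (R i)ᵀ)⁻¹ *ᵥ (R i *ᵥ A *ᵥ v) := by
  rw [dotProduct_mulVec, ← mulVec_transpose, hA, dotProduct_comm, additiveSchwarz, sum_mulVec]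
  simp only [← mulVec_mulVec]
  rw [sum_transpose_mulVec_dotProduct]
  exact Finset.sum_congr rfl fun i _ => dotProduct_comm _ _

theorem one_le_mul_of_stable_decomposition {A : Matrix k k ℝ} (hA : A.PosDef)
    {R : ∀ i, Matrix (m i) k ℝ} (hR : ∀ i, Function.Surjective (R i).mulVec) {c μ : ℝ}
    (hc : 0 < c) {v : k → ℝ} (hv : v ≠ 0) (hev : additiveSchwarz A R *ᵥ v = μ • v)
    (w : ∀ i, m i → ℝ) (hdec : v = ∑ i, (R i)ᵀ *ᵥ w i)
    (hstab : ∑ i, w i ⬝ᵥ (R i * A * (R i)ᵀ) *ᵥ w i ≤ c * (v ⬝ᵥ A *ᵥ v)) :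
    1 ≤ c * μ := by
  set a := v ⬝ᵥ A *ᵥ v
  have ha : 0 < a := by simpa using hA.dotProduct_mulVec_pos hv
  have hwu : ∑ i, w i ⬝ᵥ R i *ᵥ A *ᵥ v = a := by
    rw [← sum_transpose_mulVec_dotProduct, ← hdec]
  have huu : ∑ i, (R i *ᵥ A *ᵥ v) ⬝ᵥ (R i * A * (R i)ᵀ)⁻¹ *ᵥ (R i *ᵥ A *ᵥ v) = μ * a := by
    rw [← dotProduct_mulVec_additiveSchwarz (show A.IsSymm from hA.1) R, hev, mulVec_smul,
      dotProduct_smul, smul_eq_mul]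
  have key : 2 * c * a ≤ c * a + c ^ 2 * (μ * a) :=
    calc 2 * c * a = ∑ i, 2 * c * (w i ⬝ᵥ R i *ᵥ A *ᵥ v) := by rw [← Finset.mul_sum, hwu]
      _ ≤ ∑ i, (w i ⬝ᵥ (R i * A * (R i)ᵀ) *ᵥ w i +
            c ^ 2 * ((R i *ᵥ A *ᵥ v) ⬝ᵥ (R i * A * (R i)ᵀ)⁻¹ *ᵥ (R i *ᵥ A *ᵥ v))) :=
        Finset.sum_le_sum fun i _ =>
          (hA.mul_mul_transpose_of_mulVec_surjective (hR i)).two_mul_dotProduct_le c _ _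
      _ ≤ c * a + c ^ 2 * (μ * a) := by
        rw [Finset.sum_add_distrib, ← Finset.mul_sum, huu]
        gcongr
  have : c * a * 1 ≤ c * a * (c * μ) := by linarith
  exact le_of_mul_le_mul_left this (by positivity)

end AdditiveSchwarz

/-- Lions' lemma / abstract Schwarz lower bound: if every vector `v` admits a stable
decomposition `v = Σ_i R_iᵀ v_i` with `Σ_i v_iᵀ (R_i A R_iᵀ) v_i ≤ C₀² vᵀ A v`, then every
eigenvalue of the additive Schwarz operator `P = Σ_i R_iᵀ (R_i A R_iᵀ)⁻¹ R_i A` is at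
least `C₀⁻²`. -/
theorem stmt9 (n N : ℕ) (A : Matrix (Fin n) (Fin n) ℝ) (hA : A.PosDef)
    (m : Fin (N + 1) → ℕ) (R : ∀ i, Matrix (Fin (m i)) (Fin n) ℝ)
    (hR : ∀ i, Function.Surjective (R i).mulVec)
    (C0 : ℝ) (hC0 : 0 < C0)
    (hstable : ∀ v : Fin n → ℝ, ∃ w : ∀ i, Fin (m i) → ℝ,
      v = ∑ i, ((R i)ᵀ).mulVec (w i) ∧
      ∑ i, w i ⬝ᵥ (R i * A * (R i)ᵀ).mulVec (w i) ≤ C0 ^ 2 * (v ⬝ᵥ A.mulVec v))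
    (P : Matrix (Fin n) (Fin n) ℝ)
    (hP : P = ∑ i, (R i)ᵀ * (R i * A * (R i)ᵀ)⁻¹ * R i * A) :
    ∀ (μ : ℝ) (v : Fin n → ℝ), v ≠ 0 → P.mulVec v = μ • v → (C0 ^ 2)⁻¹ ≤ μ := by
  intro μ v hv hev
  obtain ⟨w, hdec, hstab⟩ := hstable v
  rw [inv_le_iff_one_le_mul₀' (by positivity)]
  subst hP
  exact one_le_mul_of_stable_decomposition hA hR (by positivity) hv hev w hdec hstab
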